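/- arXiv:1512.08147 — 5 statements merged into one kernel-verified Lean document; each statement's English description precedes it below -/
import Mathlib

section
/- Let H = (V,E) and H' = (V,E') be unweighted undirected graphs on the same finite vertex set with E ⊆ E', with H connected, and let s ∈ V. If there exists a node y with d_H(y,s) ≥ d_{H'}(y,s) + δ for some integer δ ≥ 1, then Σ_{x∈V} d_H(x,s) ≥ Σ_{x∈V} d_{H'}(x,s) + Ω(δ²); concretely, Σ_{x∈V} d_H(x,s) ≥ Σ_{x∈V} d_{H'}(x,s) + δ⌊δ/2⌋ − ⌊δ/2⌋(⌊δ/2⌋+1). -/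
/-!
Along a shortest `H`-path `y = p₀, p₁, …` to `s`, the vertex `pᵢ` has `d_H(pᵢ, s) = d_H(y, s) - i`
while `d_{H'}(pᵢ, s) ≤ i + d_{H'}(y, s)`, so its gap `d_H(pᵢ, s) - d_{H'}(pᵢ, s)` is at least
`δ - 2i`. The `pᵢ` are distinct and every gap is nonnegative, so the total gap is at least
`∑_{i < ⌊δ/2⌋} (δ - 2i)`.
-/

open Finset

lemma Finset.sum_range_sub_two_mul (a : ℤ) (k : ℕ) :
    ∑ i ∈ range k, (a - 2 * i) = k * a - k * (k - 1) := by
  induction k with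
  | zero => simp
  | succ k ih => rw [sum_range_succ, ih]; push_cast; ring

namespace SimpleGraph

variable {V : Type*} {G G' : SimpleGraph V} {u v : V}

lemma Walk.dist_getVert_le (p : G.Walk u v) (n : ℕ) : G.dist u (p.getVert n) ≤ n :=
  (dist_le (p.take n)).trans (by simp [take_length])

lemma Walk.dist_getVert_of_length_eq_dist {p : G.Walk u v} (hp : p.length = G.dist u v)
    (n : ℕ) : G.dist (p.getVert n) v = G.dist u v - n := by
  rw [← length_eq_dist_of_subwalk hp (p.isSubwalk_drop n), drop_length, hp]

lemma Walk.dist_sub_dist_getVert_ge (hle : G ≤ G') {p : G.Walk u v}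
    (hp : p.length = G.dist u v) {n : ℕ} (hn : n ≤ G.dist u v) :
    (G.dist u v : ℤ) - G'.dist u v - 2 * n ≤
      (G.dist (p.getVert n) v : ℤ) - G'.dist (p.getVert n) v := by
  have hG : G.dist (p.getVert n) v = G.dist u v - n := dist_getVert_of_length_eq_dist hp n
  have hG' : G'.dist (p.getVert n) v ≤ n + G'.dist u v :=
    calc G'.dist (p.getVert n) v ≤ G'.dist (p.getVert n) u + G'.dist u v :=
          (p.map (.ofLE hle)).reachable.dist_triangle_right _
      _ ≤ G.dist (p.getVert n) u + G'.dist u v := by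
          gcongr; exact (p.take n).reachable.symm
      _ ≤ n + G'.dist u v := by rw [dist_comm]; gcongr; exact p.dist_getVert_le n
  omega

lemma sum_range_le_sum_dist_sub_dist [Fintype V] (hle : G ≤ G') (hconn : G.Connected)
    {k : ℕ} (hk : k ≤ G.dist u v) :
    ∑ i ∈ range k, ((G.dist u v : ℤ) - G'.dist u v - 2 * i) ≤
      ∑ x, ((G.dist x v : ℤ) - G'.dist x v) := by
  classical
  obtain ⟨p, hp⟩ := hconn.exists_walk_length_eq_dist u v
  have hinj : Set.InjOn p.getVert (range k) := fun i hi j hj ↦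
    (p.isPath_of_length_eq_dist hp).getVert_injOn
      (by simp at hi ⊢; omega) (by simp at hj ⊢; omega)
  calc ∑ i ∈ range k, ((G.dist u v : ℤ) - G'.dist u v - 2 * i)
      ≤ ∑ i ∈ range k, ((G.dist (p.getVert i) v : ℤ) - G'.dist (p.getVert i) v) :=
        sum_le_sum fun i hi ↦ p.dist_sub_dist_getVert_ge hle hp (by simp at hi; omega)
    _ = ∑ x ∈ (range k).image p.getVert, ((G.dist x v : ℤ) - G'.dist x v) := by
        rw [sum_image hinj]
    _ ≤ ∑ x, ((G.dist x v : ℤ) - G'.dist x v) :=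
        sum_le_univ_sum_of_nonneg fun x ↦
          sub_nonneg.2 (by exact_mod_cast (hconn x v).dist_anti hle)

end SimpleGraph

theorem stmt1_general {V : Type*} [Fintype V] (H H' : SimpleGraph V) (hle : H ≤ H')
    (hconn : H.Connected) (s y : V) (δ : ℕ)
    (hy : H.dist y s ≥ H'.dist y s + δ) :
    (∑ x : V, H.dist x s) + (δ / 2) * (δ / 2 + 1) ≥
      (∑ x : V, H'.dist x s) + δ * (δ / 2) := by
  set k := δ / 2
  have hgap : ∑ i ∈ range k, ((δ : ℤ) - 2 * i) ≤ ∑ x, ((H.dist x s : ℤ) - H'.dist x s) :=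
    calc ∑ i ∈ range k, ((δ : ℤ) - 2 * i)
        ≤ ∑ i ∈ range k, ((H.dist y s : ℤ) - H'.dist y s - 2 * i) :=
          sum_le_sum fun i _ ↦ by omega
      _ ≤ _ := SimpleGraph.sum_range_le_sum_dist_sub_dist hle hconn (by omega)
  rw [sum_range_sub_two_mul, sum_sub_distrib] at hgap
  zify
  linarith [(k.cast_nonneg : (0 : ℤ) ≤ k)]

/-- If some node's distance to `s` is larger in `H` than in `H' ⊇ H` by at
least `δ ≥ 1`, then the total sum of distances to `s` is larger by at least
`δ⌊δ/2⌋ − ⌊δ/2⌋(⌊δ/2⌋+1)` (stated additively to avoid truncated subtraction). -/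
theorem stmt1 {V : Type*} [Fintype V] (H H' : SimpleGraph V) (hle : H ≤ H')
    (hconn : H.Connected) (s y : V) (δ : ℕ) (hδ : 1 ≤ δ)
    (hy : H.dist y s ≥ H'.dist y s + δ) :
    (∑ x : V, H.dist x s) + (δ / 2) * (δ / 2 + 1) ≥
      (∑ x : V, H'.dist x s) + δ * (δ / 2) :=
  stmt1_general H H' hle hconn s y δ hy
end

section
/- Let G₀ ⊆ G be unweighted undirected graphs on the same vertex set (G obtained from G₀ by edge insertions), s a root node, and let I be the set of inserted edges (edges of G not in G₀). Suppose every inserted edge (u,v) with d_{G₀}(u,s) > d_{G₀}(v,s) satisfies d_{G₀}(u,s) ≤ d_{G₀}(v,s) + δ. Then for any node x and any shortest path π = x_l,…,x_0 from x to s in G, letting S_j be the number of inserted edges on the subpath x_j,…,x_0, we have d_{G₀}(x_j,s) ≤ d_G(x_j,s) + S_j·δ for all 0 ≤ j ≤ l. -/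
/-- Along a shortest path `x = x_l, …, x_0 = s` in `G`, if every inserted edge
`(u,v)` satisfies `d_{G₀}(u,s) ≤ d_{G₀}(v,s) + δ`, then
`d_{G₀}(x_j,s) ≤ d_G(x_j,s) + S_j·δ`, where `S_j` is the number of inserted edges on the
subpath `x_j, …, x_0`. -/
theorem stmt3 {V : Type*} (G₀ G : SimpleGraph V) [DecidableRel G₀.Adj]
    (hle : G₀ ≤ G) (s x : V) (δ : ℕ)
    (hreach : ∀ v : V, G₀.Reachable v s)
    (hins : ∀ u v : V, G.Adj u v → ¬ G₀.Adj u v → G₀.dist u s ≤ G₀.dist v s + δ)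
    (l : ℕ) (f : ℕ → V) (hf0 : f 0 = s) (hfl : f l = x)
    (hadj : ∀ j < l, G.Adj (f (j + 1)) (f j))
    (hshort : ∀ j ≤ l, G.dist (f j) s = j) :
    ∀ j ≤ l, G₀.dist (f j) s ≤ G.dist (f j) s +
      ((Finset.range j).filter (fun i => ¬ G₀.Adj (f (i + 1)) (f i))).card * δ := by
  intro j hj
  induction j with
  | zero => simp [hf0, SimpleGraph.dist_self]
  | succ n ih =>
    have hn : n ≤ l := Nat.le_of_succ_le hj
    have ih' := ih hn
    have hd1 : G.dist (f n) s = n := hshort n hn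
    have hd2 : G.dist (f (n+1)) s = n + 1 := hshort (n+1) hj
    rw [hd1] at ih'
    rw [hd2]
    by_cases h : G₀.Adj (f (n+1)) (f n)
    · have hcard : ((Finset.range (n+1)).filter
          (fun i => ¬ G₀.Adj (f (i + 1)) (f i))).card =
          ((Finset.range n).filter (fun i => ¬ G₀.Adj (f (i + 1)) (f i))).card := by
        rw [Finset.range_add_one, Finset.filter_insert]
        simp [h]
      rw [hcard]
      -- dist (f (n+1)) s ≤ dist (f n) s + 1
      obtain ⟨p, hp⟩ := (hreach (f n)).exists_walk_length_eq_dist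
      have := SimpleGraph.dist_le (SimpleGraph.Walk.cons h p)
      simp only [SimpleGraph.Walk.length_cons, hp] at this
      omega
    · have hcard : ((Finset.range (n+1)).filter
          (fun i => ¬ G₀.Adj (f (i + 1)) (f i))).card =
          ((Finset.range n).filter (fun i => ¬ G₀.Adj (f (i + 1)) (f i))).card + 1 := by
        rw [Finset.range_add_one, Finset.filter_insert]
        simp [h, Finset.card_insert_of_notMem]
      rw [hcard]
      have := hins (f (n+1)) (f n) (hadj n (Nat.lt_of_succ_le hj)) h
      have hm : (((Finset.range n).filter (fun i => ¬ G₀.Adj (f (i + 1)) (f i))).card + 1) * δ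
          = ((Finset.range n).filter (fun i => ¬ G₀.Adj (f (i + 1)) (f i))).card * δ + δ := by
        ring
      omega
end

section
/- Under the assumptions of the previous statement, if at most κ edges have been inserted (|I| ≤ κ), then for every node x: d_G(x,s) ≤ d_{G₀}(x,s) ≤ d_G(x,s) + κ·δ. -/
open SimpleGraph

open scoped Classical in
private lemma stmt4_aux {V : Type*} [Fintype V] (G₀ G : SimpleGraph V)
    (δ : ℕ) {x s : V} (p : G.Walk x s)
    (hreach : ∀ v : V, G₀.Reachable v s)
    (hins : ∀ u v : V, G.Adj u v → ¬ G₀.Adj u v → G₀.dist u s ≥ G₀.dist v s →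
      G₀.dist u s ≤ G₀.dist v s + δ) :
    G₀.dist x s ≤ p.length +
      (p.edges.filter (fun e => decide (e ∉ G₀.edgeSet))).length * δ := by
  induction p with
  | nil => simp
  | @cons a b c h q ih =>
    by_cases hab : G₀.Adj a b
    · have h1 : G₀.dist a c ≤ G₀.dist b c + 1 := by
        obtain ⟨w, hw⟩ := (hreach b).exists_walk_length_eq_dist
        have := SimpleGraph.dist_le (SimpleGraph.Walk.cons hab w)
        simpa [hw] using this
      have hfilter : ((SimpleGraph.Walk.cons h q).edges.filter
          (fun e => decide (e ∉ G₀.edgeSet))).length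
          = (q.edges.filter (fun e => decide (e ∉ G₀.edgeSet))).length := by
        simp [SimpleGraph.Walk.edges_cons, List.filter_cons, hab,
          SimpleGraph.mem_edgeSet]
      have ih' := ih hreach hins
      rw [hfilter]
      simp only [SimpleGraph.Walk.length_cons]
      omega
    · have h1 : G₀.dist a c ≤ G₀.dist b c + δ := by
        rcases le_total (G₀.dist b c) (G₀.dist a c) with hle' | hle'
        · exact hins a b h hab hle'
        · omega
      have hfilter : ((SimpleGraph.Walk.cons h q).edges.filter
          (fun e => decide (e ∉ G₀.edgeSet))).length
          = (q.edges.filter (fun e => decide (e ∉ G₀.edgeSet))).length + 1 := by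
        simp [SimpleGraph.Walk.edges_cons, List.filter_cons, hab,
          SimpleGraph.mem_edgeSet]
      have ih' := ih hreach hins
      rw [hfilter]
      simp only [SimpleGraph.Walk.length_cons]
      have : (q.edges.filter (fun e => decide (e ∉ G₀.edgeSet))).length * δ + δ
          = ((q.edges.filter (fun e => decide (e ∉ G₀.edgeSet))).length + 1) * δ := by
        ring
      omega

/-- If at most `κ` edges were inserted into `G₀` to obtain `G`, and every
inserted edge `{u,v}` with `d_{G₀}(u,s) ≥ d_{G₀}(v,s)` satisfies
`d_{G₀}(u,s) ≤ d_{G₀}(v,s) + δ`, then for every node `x`: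
`d_G(x,s) ≤ d_{G₀}(x,s) ≤ d_G(x,s) + κ·δ`. -/
theorem stmt4 {V : Type*} [Fintype V] (G₀ G : SimpleGraph V) (hle : G₀ ≤ G)
    (s : V) (κ δ : ℕ)
    (hreach : ∀ v : V, G₀.Reachable v s)
    (hcard : (G.edgeSet \ G₀.edgeSet).ncard ≤ κ)
    (hins : ∀ u v : V, G.Adj u v → ¬ G₀.Adj u v → G₀.dist u s ≥ G₀.dist v s →
      G₀.dist u s ≤ G₀.dist v s + δ) :
    ∀ x : V, G.dist x s ≤ G₀.dist x s ∧ G₀.dist x s ≤ G.dist x s + κ * δ := by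
  classical
  intro x
  constructor
  · obtain ⟨p, hp⟩ := (hreach x).exists_walk_length_eq_dist
    have := SimpleGraph.dist_le (p.mapLe hle)
    simpa [hp] using this
  · obtain ⟨p, hpath, hp⟩ := ((hreach x).mono hle).exists_path_of_dist
    have key := stmt4_aux G₀ G δ p hreach hins
    set l := p.edges.filter (fun e => decide (e ∉ G₀.edgeSet)) with hl
    have hnd : l.Nodup := (hpath.isTrail.edges_nodup).filter _
    have hsub : ∀ e ∈ l, e ∈ G.edgeSet \ G₀.edgeSet := by
      intro e he
      rw [hl, List.mem_filter] at he
      refine ⟨p.edges_subset_edgeSet he.1, ?_⟩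
      have := he.2
      simpa using this
    have hcount : l.length ≤ κ := by
      have h1 : l.length = l.toFinset.card := (List.toFinset_card_of_nodup hnd).symm
      have h2 : (l.toFinset : Set (Sym2 V)) ⊆ G.edgeSet \ G₀.edgeSet := by
        intro e he
        simp only [Finset.mem_coe, List.mem_toFinset] at he
        exact hsub e he
      have h3 : (l.toFinset : Set (Sym2 V)).ncard ≤ (G.edgeSet \ G₀.edgeSet).ncard :=
        Set.ncard_le_ncard h2 (Set.toFinite _)
      rw [Set.ncard_coe_finset] at h3
      omega
    have hmul : l.length * δ ≤ κ * δ := Nat.mul_le_mul_right δ hcount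
    omega
end

section
/- Let G₀ and G be unweighted undirected graphs where G is obtained from G₀ by deleting edges, let s be a root, and let u ≠ s be a node with d_G(u,s) finite and d_G(u,s) < d_{G₀}(u,s) + δ for an integer δ ≥ 1. Then there exists a node v such that d_{G₀}(v,s) < d_{G₀}(u,s) and d_G(u,v) ≤ δ. -/
private lemma dist_mono_aux {V : Type*} {G₀ G : SimpleGraph V} (hle : G ≤ G₀) {a b : V}
    (h : G.Reachable a b) : G₀.dist a b ≤ G.dist a b := by
  obtain ⟨p, hp⟩ := h.exists_walk_length_eq_dist
  calc G₀.dist a b ≤ (p.mapLe hle).length := SimpleGraph.dist_le _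
    _ = p.length := SimpleGraph.Walk.length_map _ _
    _ = G.dist a b := hp

private lemma getVert_dists {V : Type*} {G : SimpleGraph V} {u s : V} (p : G.Walk u s) :
    ∀ k : ℕ, G.dist u (p.getVert k) ≤ k ∧ G.dist (p.getVert k) s ≤ p.length - k := by
  induction p with
  | @nil x =>
    intro k
    have h0 : (SimpleGraph.Walk.nil : G.Walk x x).getVert k = x :=
      SimpleGraph.Walk.getVert_of_length_le _ (by simp)
    simp [h0, SimpleGraph.dist_self]
  | @cons a b c h q ih =>
    intro k
    cases k with
    | zero =>
      simp only [SimpleGraph.Walk.getVert_zero, SimpleGraph.dist_self, Nat.sub_zero]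
      exact ⟨le_refl _, SimpleGraph.dist_le _⟩
    | succ k =>
      obtain ⟨h1, h2⟩ := ih k
      classical
      have hrb : G.Reachable b (q.getVert k) := by
        by_cases hk : k ≤ q.length
        · exact ⟨q.takeUntil _ (SimpleGraph.Walk.mem_support_iff_exists_getVert.mpr
            ⟨k, rfl, hk⟩)⟩
        · rw [SimpleGraph.Walk.getVert_of_length_le _ (by omega)]
          exact ⟨q⟩
      obtain ⟨w, hw⟩ := hrb.exists_walk_length_eq_dist
      constructor
      · have := SimpleGraph.dist_le (SimpleGraph.Walk.cons h w)
        simp only [SimpleGraph.Walk.length_cons, hw] at this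
        show G.dist a (q.getVert k) ≤ k + 1
        omega
      · show G.dist (q.getVert k) c ≤ (q.length + 1) - (k + 1)
        omega

/-- In the decremental setting (`G ⊆ G₀`), if `u ≠ s` is still connected to `s`
in `G` and `d_G(u,s) < d_{G₀}(u,s) + δ`, then there is a node `v` with
`d_{G₀}(v,s) < d_{G₀}(u,s)` and `d_G(u,v) ≤ δ`. -/
theorem stmt5 {V : Type*} (G₀ G : SimpleGraph V) (hle : G ≤ G₀) (s u : V) (δ : ℕ)
    (hδ : 1 ≤ δ) (hus : u ≠ s) (hreach : G.Reachable u s)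
    (hlt : G.dist u s < G₀.dist u s + δ) :
    ∃ v : V, G₀.dist v s < G₀.dist u s ∧ G.dist u v ≤ δ := by
  by_cases hcase : G.dist u s ≤ δ
  · refine ⟨s, ?_, hcase⟩
    rw [SimpleGraph.dist_self]
    exact (hreach.mono hle).pos_dist_of_ne hus
  · push_neg at hcase
    obtain ⟨p, hp⟩ := hreach.exists_walk_length_eq_dist
    refine ⟨p.getVert δ, ?_, (getVert_dists p δ).1⟩
    have h2 := (getVert_dists p δ).2
    rw [hp] at h2
    classical
    have hr : G.Reachable (p.getVert δ) s :=
      ⟨p.dropUntil _ (SimpleGraph.Walk.mem_support_iff_exists_getVert.mpr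
        ⟨δ, rfl, by omega⟩)⟩
    have := dist_mono_aux hle hr
    omega
end

section
/- Let T₀ be a BFS tree of a graph G₀ rooted at s, and let T be a tree rooted at s whose edges are either (i) tree edges (u,v) of T₀ with weight 1 and d_{G₀}(u,s) = d_{G₀}(v,s) + 1, or (ii) 'artificial' weighted edges (u,v) satisfying d_G(u,v) + d_{G₀}(v,s) ≤ d_{G₀}(u,s) + δ with weight d_G(u,v). If the path in T from a node x to s contains at most κ artificial edges, then d_T^w(x,s) ≤ d_{G₀}(x,s) + κ·δ. -/
/-- Along the tree path `s = f 0, f 1, …, f l = x`, each edge `(f (j+1), f j)`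
is either a BFS-tree edge of `G₀` (weight 1, `d_{G₀}(f (j+1),s) = d_{G₀}(f j,s) + 1`) or an
artificial edge of weight `d_G(f (j+1), f j)` satisfying
`d_G(f (j+1), f j) + d_{G₀}(f j, s) ≤ d_{G₀}(f (j+1), s) + δ`.
If at most `κ` edges on the path are artificial, then the weighted path length satisfies
`d_T^w(x,s) ≤ d_{G₀}(x,s) + κ·δ`. -/
theorem stmt7 {V : Type*} (G₀ G : SimpleGraph V) (s x : V) (κ δ : ℕ)
    (l : ℕ) (f : ℕ → V) (hf0 : f 0 = s) (hfl : f l = x)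
    (w : ℕ → ℕ) (art : ℕ → Bool)
    (hedge : ∀ j < l,
      (art j = false → G₀.Adj (f (j + 1)) (f j) ∧ w j = 1 ∧
        G₀.dist (f (j + 1)) s = G₀.dist (f j) s + 1) ∧
      (art j = true → w j = G.dist (f (j + 1)) (f j) ∧
        G.dist (f (j + 1)) (f j) + G₀.dist (f j) s ≤ G₀.dist (f (j + 1)) s + δ))
    (hcard : ((Finset.range l).filter (fun j => art j = true)).card ≤ κ) :
    ∑ j ∈ Finset.range l, w j ≤ G₀.dist x s + κ * δ := by
  have key : ∀ m ≤ l, ∑ j ∈ Finset.range m, w j ≤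
      G₀.dist (f m) s + ((Finset.range m).filter (fun j => art j = true)).card * δ := by
    intro m hm
    induction m with
    | zero => simp [hf0]
    | succ n ih =>
      have hn : n ≤ l := Nat.le_of_succ_le hm
      have ihn := ih hn
      have hnl : n < l := hm
      rw [Finset.sum_range_succ]
      rcases (Bool.eq_false_or_eq_true (art n)).symm with hb | hb
      · obtain ⟨_, hw, hd⟩ := (hedge n hnl).1 hb
        have hfilt : (Finset.range (n+1)).filter (fun j => art j = true) =
            (Finset.range n).filter (fun j => art j = true) := by
          rw [Finset.range_add_one, Finset.filter_insert]
          simp [hb]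
        rw [hfilt, hw, hd]
        omega
      · obtain ⟨hw, hd⟩ := (hedge n hnl).2 hb
        have hfilt : ((Finset.range (n+1)).filter (fun j => art j = true)).card =
            ((Finset.range n).filter (fun j => art j = true)).card + 1 := by
          rw [Finset.range_add_one, Finset.filter_insert]
          simp [hb, Finset.card_insert_of_notMem]
        rw [hfilt, hw]
        have := hd
        nlinarith [ihn, hd]
  have h := key l le_rfl
  rw [hfl] at h
  have hc : ((Finset.range l).filter (fun j => art j = true)).card * δ ≤ κ * δ :=
    Nat.mul_le_mul_right δ hcard
  omega
end
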